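/- arXiv:1306.1492 — 3 statements merged into one kernel-verified Lean document; each statement's English description precedes it below -/
import Mathlib

section
/- Let μ be a nonnegative monotonically increasing right-continuous function on (-∞, 0] with μ(x) ≥ 0 for x < 0, such that there is a constant M with ∫_{-a}^{-ε} x² dμ(x) ≤ M for all ε ∈ (0, a). Then ε² μ(-ε) → 0 as ε → 0⁺. -/
open MeasureTheory Set Filter Topology

/-!
The truncated integrals are bounded by `M`, so `x ↦ x²` is integrable on `(-a, 0)` for the
Stieltjes measure `ν` of `μ`. On `(-a, -ε]` we have `ε² ≤ x²`, so `ε² ν(-a, -ε]` is the integral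
over `(-a, 0)` of `ε² 𝟙_{(-a, -ε]}`, a family dominated by `x²` and tending to `0` pointwise;
dominated convergence gives `ε² (μ(-ε) - μ(-a)) → 0`, and `ε² μ(-a) → 0` trivially.
-/

theorem tendsto_sq_nhdsGT_zero : Tendsto (fun ε : ℝ => ε ^ 2) (𝓝[>] 0) (𝓝 0) :=
  tendsto_nhdsWithin_of_tendsto_nhds ((continuous_pow 2).tendsto' 0 0 (by norm_num))

theorem integrableOn_Ioo_of_setIntegral_norm_le {E : Type*} [NormedAddCommGroup E]
    {ν : Measure ℝ} {f : ℝ → E} {a b M : ℝ}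
    (hfm : AEStronglyMeasurable f (ν.restrict (Ioo a b)))
    (hf : ∀ᶠ c in 𝓝[<] b, IntegrableOn f (Ioc a c) ν)
    (hM : ∀ᶠ c in 𝓝[<] b, ∫ x in Ioc a c, ‖f x‖ ∂ν ≤ M) :
    IntegrableOn f (Ioo a b) ν := by
  have hφ : AECover (ν.restrict (Ioo a b)) (𝓝[<] b) (fun c => Ioc a c) :=
    aecover_restrict_of_ae_imp measurableSet_Ioo
      (ae_of_all _ fun x hx =>
        mem_of_superset (Ioo_mem_nhdsLT hx.2) fun c hc => ⟨hx.1, hc.1.le⟩)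
      fun _ => measurableSet_Ioc
  refine hφ.integrable_of_lintegral_enorm_bounded M hfm ?_
  filter_upwards [hf, hM, self_mem_nhdsWithin] with c hfc hMc (hcb : c < b)
  rw [Measure.restrict_restrict measurableSet_Ioc,
    inter_eq_left.2 (Ioc_subset_Ioo_right hcb), ← ofReal_integral_norm_eq_lintegral_enorm hfc]
  exact ENNReal.ofReal_le_ofReal hMc

theorem tendsto_sq_mul_measureReal_Ioc {ν : Measure ℝ} {a : ℝ}
    (h : IntegrableOn (fun x => x ^ 2) (Ioo a 0) ν) :
    Tendsto (fun ε => ε ^ 2 * ν.real (Ioc a (-ε))) (𝓝[>] 0) (𝓝 0) := by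
  have hdom : Tendsto (fun ε => ∫ x in Ioo a 0, (Ioc a (-ε)).indicator (fun _ => ε ^ 2) x ∂ν)
      (𝓝[>] 0) (𝓝 (∫ x in Ioo a 0, (0 : ℝ) ∂ν)) := by
    refine tendsto_integral_filter_of_dominated_convergence (fun x => x ^ 2)
      (Eventually.of_forall fun ε => aestronglyMeasurable_const.indicator measurableSet_Ioc) ?_ h
      (ae_of_all _ fun x => tendsto_of_tendsto_of_tendsto_of_le_of_le tendsto_const_nhds
        tendsto_sq_nhdsGT_zero
        (fun ε => indicator_nonneg (fun _ _ => sq_nonneg ε) x)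
        (fun ε => indicator_le_self' (fun _ _ => sq_nonneg ε) x))
    filter_upwards [self_mem_nhdsWithin] with ε (hε : 0 < ε)
    refine ae_of_all _ fun x => ?_
    by_cases hx : x ∈ Ioc a (-ε)
    · rw [indicator_of_mem hx, Real.norm_of_nonneg (sq_nonneg ε)]
      nlinarith [hx.2]
    · rw [indicator_of_notMem hx, norm_zero]
      exact sq_nonneg x
  rw [integral_zero] at hdom
  refine hdom.congr' ?_
  filter_upwards [self_mem_nhdsWithin] with ε (hε : 0 < ε)
  rw [integral_indicator_const _ measurableSet_Ioc, measureReal_restrict_apply measurableSet_Ioc,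
    inter_eq_left.2 (Ioc_subset_Ioo_right (neg_lt_zero.2 hε)), smul_eq_mul, mul_comm]

theorem StieltjesFunction.measureReal_Ioc (μ : StieltjesFunction ℝ) {a b : ℝ} (hab : a ≤ b) :
    μ.measure.real (Ioc a b) = μ b - μ a := by
  rw [measureReal_def, μ.measure_Ioc, ENNReal.toReal_ofReal (sub_nonneg.2 (μ.mono hab))]

theorem stmt0_general (μ : StieltjesFunction ℝ) (a M : ℝ) (ha : 0 < a)
    (hM : ∀ ε ∈ Ioo (0 : ℝ) a, ∫ x in Ioc (-a) (-ε), x ^ 2 ∂μ.measure ≤ M) :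
    Tendsto (fun ε : ℝ => ε ^ 2 * μ (-ε)) (𝓝[>] 0) (𝓝 0) := by
  have hint : IntegrableOn (fun x : ℝ => x ^ 2) (Ioo (-a) 0) μ.measure := by
    refine integrableOn_Ioo_of_setIntegral_norm_le (M := M)
      (continuous_pow 2).aestronglyMeasurable
      (Eventually.of_forall fun c =>
        (continuous_pow 2).integrableOn_Icc.mono_set Ioc_subset_Icc_self) ?_
    filter_upwards [Ioo_mem_nhdsLT (neg_lt_zero.2 ha)] with c hc
    simpa only [Real.norm_of_nonneg (sq_nonneg _), neg_neg] using
      hM (-c) ⟨neg_pos.2 hc.2, neg_lt.1 hc.1⟩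
  have hsplit : ∀ᶠ ε in 𝓝[>] 0,
      ε ^ 2 * μ.measure.real (Ioc (-a) (-ε)) + ε ^ 2 * μ (-a) = ε ^ 2 * μ (-ε) := by
    filter_upwards [Ioo_mem_nhdsGT ha] with ε hε
    rw [μ.measureReal_Ioc (neg_le_neg hε.2.le)]
    ring
  simpa using ((tendsto_sq_mul_measureReal_Ioc hint).add
    (tendsto_sq_nhdsGT_zero.mul_const (μ (-a)))).congr' hsplit

/-- Theorem 2.1 (first half): if μ is nonnegative (for x < 0), monotonically increasing and
right-continuous (a Stieltjes function), and the Stieltjes integrals ∫_{-a}^{-ε} x² dμ(x)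
are bounded by M uniformly in ε ∈ (0, a), then ε² μ(-ε) → 0 as ε → 0⁺. -/
theorem stmt0 (μ : StieltjesFunction ℝ) (a M : ℝ) (ha : 0 < a)
    (hμ0 : ∀ x : ℝ, x < 0 → 0 ≤ μ x)
    (hM : ∀ ε ∈ Ioo (0 : ℝ) a, ∫ x in Ioc (-a) (-ε), x ^ 2 ∂μ.measure ≤ M) :
    Tendsto (fun ε : ℝ => ε ^ 2 * μ (-ε)) (𝓝[>] 0) (𝓝 0) :=
  stmt0_general μ a M ha hM
end

section
/- Let ν be a measure on ℝ satisfying ∫_{-∞}^{∞} x²/(1+x²) ν(dx) < ∞, and define μ₋(x) = ν((-∞, x]) for x < 0. Then for every a with 0 < a < ∞, the integral ∫_{-a}^{0} |x| μ₋(x) dx is finite. -/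
/-!
By Tonelli, `∫_{-a}^0 |x| ν((-∞, x]) dx = ∫ (∫_{(-a,0) ∩ [y,∞)} |x| dx) ν(dy)`, and the inner
integral is at most `min(a, |y|)² ≤ (1 + a²) y² / (1 + y²)`. Tonelli applies to `ν` restricted to
`(-∞, 0)`, which is σ-finite because `y² / (1 + y²)` is a `ν`-integrable density that is positive
there.
-/

open MeasureTheory Set

lemma MeasureTheory.sigmaFinite_of_lintegral_ne_top {α : Type*} [MeasurableSpace α]
    {μ : Measure α} {f : α → ENNReal} (hf : AEMeasurable f μ) (hf_ne_zero : ∀ᵐ x ∂μ, f x ≠ 0)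
    (hμf : ∫⁻ x, f x ∂μ ≠ ⊤) : SigmaFinite μ := by
  have : IsFiniteMeasure (μ.withDensity f) := isFiniteMeasure_withDensity hμf
  -- `μ` is the finite measure `μ.withDensity f` reweighted by the a.e. finite density `f⁻¹`.
  rw [← withDensity_inv_same₀ hf hf_ne_zero (ae_lt_top' hf hμf).ne_of_lt]
  refine SigmaFinite.withDensity_of_ne_top ?_
  filter_upwards [withDensity_absolutelyContinuous μ f hf_ne_zero] with x hx
  exact ENNReal.inv_ne_top.mpr hx

lemma MeasureTheory.lintegral_mul_measure_Iic {α : Type*} [TopologicalSpace α] [LinearOrder α]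
    [OrderClosedTopology α] [SecondCountableTopology α] [MeasurableSpace α] [OpensMeasurableSpace α]
    {μ ν : Measure α} [SFinite μ] [SFinite ν] {g : α → ENNReal} (hg : Measurable g) :
    ∫⁻ x, g x * ν (Iic x) ∂μ = ∫⁻ y, ∫⁻ x in Ici y, g x ∂μ ∂ν := by
  have hind : ∀ x y, (Iic x).indicator (fun _ ↦ g x) y = (Ici y).indicator g x := by
    intro x y
    by_cases h : y ≤ x <;> simp [h]
  have hmeas : Measurable (Function.uncurry fun x y ↦ (Iic x).indicator (fun _ ↦ g x) y) := by
    have : (Function.uncurry fun x y ↦ (Iic x).indicator (fun _ ↦ g x) y)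
        = {p : α × α | p.2 ≤ p.1}.indicator (fun p ↦ g p.1) := by
      ext ⟨x, y⟩
      by_cases h : y ≤ x <;> simp [h]
    rw [this]
    exact (hg.comp measurable_fst).indicator (measurableSet_le measurable_snd measurable_fst)
  calc ∫⁻ x, g x * ν (Iic x) ∂μ = ∫⁻ x, ∫⁻ y, (Iic x).indicator (fun _ ↦ g x) y ∂ν ∂μ := by
        simp_rw [lintegral_indicator_const measurableSet_Iic]
    _ = ∫⁻ y, ∫⁻ x, (Ici y).indicator g x ∂μ ∂ν := by
        simp_rw [lintegral_lintegral_swap hmeas.aemeasurable, hind]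
    _ = ∫⁻ y, ∫⁻ x in Ici y, g x ∂μ ∂ν := by
        simp_rw [lintegral_indicator measurableSet_Ici]

lemma min_abs_sq_le_one_add_sq_mul_div {a : ℝ} (ha : 0 ≤ a) (y : ℝ) :
    min a |y| ^ 2 ≤ (1 + a ^ 2) * (y ^ 2 / (1 + y ^ 2)) := by
  have hm : 0 ≤ min a |y| := le_min ha (abs_nonneg y)
  have hma : min a |y| ^ 2 ≤ a ^ 2 := pow_le_pow_left₀ hm (min_le_left _ _) 2
  have hmy : min a |y| ^ 2 ≤ y ^ 2 := sq_abs y ▸ pow_le_pow_left₀ hm (min_le_right _ _) 2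
  rw [← mul_div_assoc, le_div_iff₀ (by positivity)]
  nlinarith [sq_nonneg y]

lemma setLIntegral_Ici_abs_le_min_sq {a : ℝ} (ha : 0 ≤ a) (y : ℝ) :
    ∫⁻ x in Ici y, ENNReal.ofReal |x| ∂(volume.restrict (Ioo (-a) 0))
      ≤ ENNReal.ofReal (min a |y| ^ 2) := by
  set m := min a |y|
  have hm : 0 ≤ m := le_min ha (abs_nonneg y)
  have hsub : Ici y ∩ Ioo (-a) 0 ⊆ Ico (-m) 0 := fun x ⟨hyx, hax, hx0⟩ ↦
    ⟨neg_le.mpr (le_min_iff.mpr ⟨by linarith, by linarith [neg_abs_le y, mem_Ici.mp hyx]⟩), hx0⟩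
  calc ∫⁻ x in Ici y, ENNReal.ofReal |x| ∂(volume.restrict (Ioo (-a) 0))
      ≤ ∫⁻ x in Ico (-m) 0, ENNReal.ofReal |x| := by
        rw [Measure.restrict_restrict measurableSet_Ici]
        exact lintegral_mono_set hsub
    _ ≤ ∫⁻ _ in Ico (-m) 0, ENNReal.ofReal m := by
        refine setLIntegral_mono measurable_const fun x ⟨hmx, hx0⟩ ↦ ?_
        exact ENNReal.ofReal_le_ofReal (by rw [abs_of_neg hx0]; linarith)
    _ = ENNReal.ofReal (m ^ 2) := by
        rw [setLIntegral_const, Real.volume_Ico, sub_neg_eq_add, zero_add,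
          ← ENNReal.ofReal_mul hm, sq]

/-- Relation (2.7) of Theorem 2.1: if ν is a Lévy measure, i.e.
∫ x²/(1+x²) ν(dx) < ∞, and μ₋(x) = ν((-∞, x]) for x < 0, then for every finite a > 0
the integral ∫_{-a}^{0} |x| μ₋(x) dx is finite. -/
theorem stmt1 (ν : Measure ℝ)
    (hν : ∫⁻ x, ENNReal.ofReal (x ^ 2 / (1 + x ^ 2)) ∂ν < ⊤) :
    ∀ a : ℝ, 0 < a →
      ∫⁻ x in Ioo (-a) (0 : ℝ), ENNReal.ofReal |x| * ν (Iic x) < ⊤ := by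
  intro a ha
  set f : ℝ → ENNReal := fun y ↦ ENNReal.ofReal (y ^ 2 / (1 + y ^ 2))
  have hf : Measurable f := by fun_prop
  set ν' := ν.restrict (Iio 0)
  have hν' : ∫⁻ y, f y ∂ν' < ⊤ := (setLIntegral_le_lintegral _ _).trans_lt hν
  have : SigmaFinite ν' := by
    refine sigmaFinite_of_lintegral_ne_top hf.aemeasurable ?_ hν'.ne
    refine ae_restrict_of_forall_mem measurableSet_Iio fun y hy ↦ ?_
    have : y ≠ 0 := hy.ne
    simp only [f, ne_eq, ENNReal.ofReal_eq_zero, not_le]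
    positivity
  calc ∫⁻ x in Ioo (-a) 0, ENNReal.ofReal |x| * ν (Iic x)
      = ∫⁻ x in Ioo (-a) 0, ENNReal.ofReal |x| * ν' (Iic x) :=
        setLIntegral_congr_fun measurableSet_Ioo fun x hx ↦ by
          rw [Measure.restrict_eq_self _ (Iic_subset_Iio.mpr hx.2)]
    _ = ∫⁻ y, ∫⁻ x in Ici y, ENNReal.ofReal |x| ∂(volume.restrict (Ioo (-a) 0)) ∂ν' :=
        lintegral_mul_measure_Iic (by fun_prop)
    _ ≤ ∫⁻ y, ENNReal.ofReal (1 + a ^ 2) * f y ∂ν' := by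
        refine lintegral_mono fun y ↦ (setLIntegral_Ici_abs_le_min_sq ha.le y).trans ?_
        rw [← ENNReal.ofReal_mul (by positivity)]
        exact ENNReal.ofReal_le_ofReal (min_abs_sq_le_one_add_sq_mul_div ha.le y)
    _ = ENNReal.ofReal (1 + a ^ 2) * ∫⁻ y, f y ∂ν' := lintegral_const_mul _ hf
    _ < ⊤ := ENNReal.mul_lt_top ENNReal.ofReal_lt_top hν'
end

section
/- Let Xt be a Lévy process and Δ a finite union of disjoint compact intervals contained in a finite interval K. Suppose P(X_t ∈ K) = O(t^{-1/2}) as t → ∞. Then for every positive integer n, the survival probability p(t, Δ) = P(X_τ ∈ Δ for all 0 ≤ τ ≤ t) satisfies p(t, Δ) = O(t^{-n/2}) as t → ∞. -/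
open MeasureTheory ProbabilityTheory Set Filter Topology

/-!
Let `B` be the closed ball of radius `diam Δ` about `0`. A path that stays in `Δ` up to time `t`
has its `⌊t / r⌋` increments along the grid `r ℕ` in `B`, so by independence and stationarity
`p(t, Δ) ≤ P(X_r ∈ B) ^ ⌊t / r⌋`. If `P(X_r ∈ B) < 1` for some `r > 0`, this decays exponentially,
faster than any power of `t`. Otherwise every `X_r` is a.s. bounded by `diam Δ`; as `X_{mr}` is a
sum of `m` i.i.d. copies of `X_r`, this forces `X_r = 0` a.s. Then `P(X_t ∈ K) → 0` forces `0 ∉ K`,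
and `p(t, Δ) = 0` because `X_0 = 0`.
-/

theorem isBigO_rpow_of_le_pow_floor {f : ℝ → ℝ} {w r : ℝ} (hr : 0 < r) (hw0 : 0 ≤ w)
    (hw1 : w < 1) (hf0 : ∀ᶠ t in atTop, 0 ≤ f t) (hf : ∀ᶠ t in atTop, f t ≤ w ^ ⌊t / r⌋₊)
    (a : ℝ) : f =O[atTop] fun t => t ^ a := by
  -- replacing `w` by `b ≥ w` with `0 < b` avoids a separate case `w = 0`
  set b := max w 2⁻¹
  have hb0 : 0 < b := lt_max_of_lt_right (by norm_num)
  have hb1 : b < 1 := max_lt hw1 (by norm_num)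
  have hc : 0 < -Real.log b / r := div_pos (neg_pos.2 (Real.log_neg hb0 hb1)) hr
  refine Asymptotics.IsBigO.trans ?_ (isLittleO_exp_neg_mul_rpow_atTop hc a).isBigO
  refine Asymptotics.IsBigO.of_bound b⁻¹ ?_
  filter_upwards [hf0, hf] with t hft0 hft
  rw [Real.norm_of_nonneg hft0, Real.norm_of_nonneg (Real.exp_pos _).le]
  calc f t ≤ w ^ ⌊t / r⌋₊ := hft
    _ ≤ b ^ ⌊t / r⌋₊ := pow_le_pow_left₀ hw0 (le_max_left _ _) _
    _ = b ^ (⌊t / r⌋₊ : ℝ) := (Real.rpow_natCast _ _).symm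
    _ ≤ b ^ (t / r - 1) :=
        Real.rpow_le_rpow_of_exponent_ge hb0 hb1.le (Nat.sub_one_lt_floor _).le
    _ = b⁻¹ * Real.exp (-(-Real.log b / r) * t) := by
        rw [Real.rpow_sub hb0, Real.rpow_one, Real.rpow_def_of_pos hb0]
        field_simp

section LevyIncrements

variable {Ω : Type*} [MeasurableSpace Ω] {P : Measure Ω} {X : ℝ → Ω → ℝ}

def HasStationaryIncrements (P : Measure Ω) (X : ℝ → Ω → ℝ) : Prop :=
  ∀ s t : ℝ, 0 ≤ s → s ≤ t →
    Measure.map (fun ω => X t ω - X s ω) P = Measure.map (X (t - s)) P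

def HasIndependentIncrements (P : Measure Ω) (X : ℝ → Ω → ℝ) : Prop :=
  ∀ (n : ℕ) (u : ℕ → ℝ), Monotone u → (∀ i, 0 ≤ u i) →
    iIndepFun (fun i : Fin n => fun ω => X (u (i + 1)) ω - X (u i) ω) P

theorem measure_forall_increment_mem_eq_pow (hmeas : ∀ t, Measurable (X t))
    (hstat : HasStationaryIncrements P X) (hindep : HasIndependentIncrements P X)
    {r : ℝ} (hr : 0 ≤ r) (m : ℕ) {S : Set ℝ} (hS : MeasurableSet S) :
    P {ω | ∀ i : Fin m, X ((i + 1 : ℕ) * r) ω - X (i * r) ω ∈ S} = P (X r ⁻¹' S) ^ m := by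
  have hmono : Monotone fun j : ℕ => (j : ℝ) * r :=
    fun i j hij => mul_le_mul_of_nonneg_right (Nat.cast_le.2 hij) hr
  have hlaw (i : ℕ) : P ((fun ω => X ((i + 1 : ℕ) * r) ω - X (i * r) ω) ⁻¹' S) =
      P (X r ⁻¹' S) := by
    have h := hstat (i * r) ((i + 1 : ℕ) * r) (by positivity) (hmono i.le_succ)
    rw [show ((i + 1 : ℕ) : ℝ) * r - i * r = r by push_cast; ring] at h
    rw [← Measure.map_apply (f := fun ω => X ((i + 1 : ℕ) * r) ω - X (i * r) ω)
      ((hmeas _).sub (hmeas _)) hS, h, Measure.map_apply (hmeas r) hS]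
  calc P {ω | ∀ i : Fin m, X ((i + 1 : ℕ) * r) ω - X (i * r) ω ∈ S}
      = P (⋂ i ∈ (Finset.univ : Finset (Fin m)),
          (fun ω => X ((i + 1 : ℕ) * r) ω - X (i * r) ω) ⁻¹' S) := by
        congr 1; ext; simp
    _ = ∏ i : Fin m, P ((fun ω => X ((i + 1 : ℕ) * r) ω - X (i * r) ω) ⁻¹' S) :=
        (hindep m _ hmono fun _ => by positivity).measure_inter_preimage_eq_mul _
          fun _ _ => hS
    _ = P (X r ⁻¹' S) ^ m := by
        simp only [hlaw, Finset.prod_const, Finset.card_univ, Fintype.card_fin]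

theorem measure_forall_mem_le_pow (hmeas : ∀ t, Measurable (X t))
    (hstat : HasStationaryIncrements P X) (hindep : HasIndependentIncrements P X)
    {Δ : Set ℝ} (hΔ : Bornology.IsBounded Δ) {r t : ℝ} (hr : 0 ≤ r) {m : ℕ} (hmt : m * r ≤ t) :
    P {ω | ∀ τ : ℝ, 0 ≤ τ → τ ≤ t → X τ ω ∈ Δ} ≤
      P (X r ⁻¹' Metric.closedBall 0 (Metric.diam Δ)) ^ m := by
  rw [← measure_forall_increment_mem_eq_pow hmeas hstat hindep hr m
    Metric.isClosed_closedBall.measurableSet]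
  refine measure_mono fun ω hω i => ?_
  have hi : ((i + 1 : ℕ) : ℝ) * r ≤ t :=
    (mul_le_mul_of_nonneg_right (by exact_mod_cast i.isLt) hr).trans hmt
  have hi' : (i : ℝ) * r ≤ t := (mul_le_mul_of_nonneg_right (by simp) hr).trans hi
  rw [Metric.mem_closedBall, dist_zero_right, ← dist_eq_norm]
  exact Metric.dist_le_diam_of_mem hΔ (hω _ (by positivity) hi) (hω _ (by positivity) hi')

theorem measure_preimage_eq_zero_of_forall_sum_notMem (hmeas : ∀ t, Measurable (X t))
    (hX0 : ∀ᵐ ω ∂P, X 0 ω = 0) (hstat : HasStationaryIncrements P X)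
    (hindep : HasIndependentIncrements P X) {r : ℝ} (hr : 0 ≤ r) {m : ℕ} (hm : m ≠ 0)
    {S B : Set ℝ} (hS : MeasurableSet S) (hB : ∀ᵐ ω ∂P, X (m * r) ω ∈ B)
    (hsum : ∀ x : Fin m → ℝ, (∀ i, x i ∈ S) → ∑ i, x i ∉ B) :
    P (X r ⁻¹' S) = 0 := by
  rw [← pow_eq_zero_iff hm, ← measure_forall_increment_mem_eq_pow hmeas hstat hindep hr m hS,
    measure_eq_zero_iff_ae_notMem]
  filter_upwards [hX0, hB] with ω h0 hBω hω
  refine hsum _ hω ?_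
  rwa [Fin.sum_univ_eq_sum_range (fun i => X ((i + 1 : ℕ) * r) ω - X (i * r) ω),
    Finset.sum_range_sub (fun i => X (i * r) ω), Nat.cast_zero, zero_mul, h0, sub_zero]

theorem ae_eq_zero_of_forall_ae_mem_closedBall (hmeas : ∀ t, Measurable (X t))
    (hX0 : ∀ᵐ ω ∂P, X 0 ω = 0) (hstat : HasStationaryIncrements P X)
    (hindep : HasIndependentIncrements P X) {R : ℝ}
    (hR : ∀ t, 0 < t → ∀ᵐ ω ∂P, X t ω ∈ Metric.closedBall 0 R) {t : ℝ} (ht : 0 < t) :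
    ∀ᵐ ω ∂P, X t ω = 0 := by
  -- `m + 1` increments of size `> ε` (or `< -ε`) would carry `X` out of the ball of radius `R`
  have hsmall (ε : ℝ) (hε : 0 < ε) : ∀ᵐ ω ∂P, |X t ω| ≤ ε := by
    obtain ⟨m, hm⟩ := exists_nat_gt (R / ε)
    have hRm : R < (m + 1 : ℕ) * ε := by
      rw [div_lt_iff₀ hε] at hm; push_cast; linarith
    have hsum_gt (x : Fin (m + 1) → ℝ) (hx : ∀ i, ε < x i) : (m + 1 : ℕ) * ε < ∑ i, x i := by
      simpa using Finset.sum_lt_sum_of_nonempty Finset.univ_nonempty fun i _ => hx i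
    have hsum_lt (x : Fin (m + 1) → ℝ) (hx : ∀ i, x i < -ε) : ∑ i, x i < -((m + 1 : ℕ) * ε) := by
      simpa using Finset.sum_lt_sum_of_nonempty Finset.univ_nonempty fun i _ => hx i
    have hB := hR _ (by positivity : (0 : ℝ) < (m + 1 : ℕ) * t)
    have hgt := measure_preimage_eq_zero_of_forall_sum_notMem hmeas hX0 hstat hindep ht.le
      m.succ_ne_zero measurableSet_Ioi hB fun x hx hmem => by
        have := abs_le.1 (mem_closedBall_zero_iff.1 hmem)
        linarith [hsum_gt x hx]
    have hlt := measure_preimage_eq_zero_of_forall_sum_notMem hmeas hX0 hstat hindep ht.le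
      m.succ_ne_zero measurableSet_Iio hB fun x hx hmem => by
        have := abs_le.1 (mem_closedBall_zero_iff.1 hmem)
        linarith [hsum_lt x hx]
    filter_upwards [measure_eq_zero_iff_ae_notMem.1 hgt, measure_eq_zero_iff_ae_notMem.1 hlt]
      with ω hωgt hωlt
    exact abs_le.2 ⟨not_lt.1 hωlt, not_lt.1 hωgt⟩
  filter_upwards [ae_all_iff.2 fun n : ℕ => hsmall (1 / (n + 1)) Nat.one_div_pos_of_nat] with ω hω
  by_contra h
  obtain ⟨n, hn⟩ := exists_nat_one_div_lt (abs_pos.2 h)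
  linarith [hω n]

theorem measure_forall_mem_eq_zero_of_zero_notMem (hX0 : ∀ᵐ ω ∂P, X 0 ω = 0) {Δ : Set ℝ}
    (h0 : (0 : ℝ) ∉ Δ) {t : ℝ} (ht : 0 ≤ t) :
    P {ω | ∀ τ : ℝ, 0 ≤ τ → τ ≤ t → X τ ω ∈ Δ} = 0 :=
  measure_mono_null (fun ω hω (hω0 : X 0 ω = 0) => h0 (hω0 ▸ hω 0 le_rfl ht)) (ae_iff.1 hX0)

theorem zero_notMem_of_tendsto_measure_mem [IsProbabilityMeasure P]
    (hX : ∀ t, 0 < t → ∀ᵐ ω ∂P, X t ω = 0) {K : Set ℝ}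
    (hK : Tendsto (fun t => (P {ω | X t ω ∈ K}).toReal) atTop (𝓝 0)) : (0 : ℝ) ∉ K := by
  intro h0
  refine one_ne_zero (tendsto_nhds_unique (tendsto_const_nhds.congr' ?_) hK)
  filter_upwards [eventually_gt_atTop 0] with t ht
  have hcompl : P {ω | X t ω ∈ K}ᶜ = 0 := ae_iff.1 <| by
    filter_upwards [hX t ht] with ω hω
    rwa [hω]
  rw [measure_congr (ae_eq_univ.2 hcompl), measure_univ, ENNReal.toReal_one]

end LevyIncrements

theorem stmt7_general {Ω : Type*} [MeasurableSpace Ω] (P : Measure Ω) [IsProbabilityMeasure P]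
    (X : ℝ → Ω → ℝ) (hmeas : ∀ t : ℝ, Measurable (X t))
    (hX0 : ∀ᵐ ω ∂P, X 0 ω = 0)
    (hstat : ∀ s t : ℝ, 0 ≤ s → s ≤ t →
      Measure.map (fun ω => X t ω - X s ω) P = Measure.map (X (t - s)) P)
    (hindep : ∀ (n : ℕ) (u : ℕ → ℝ), Monotone u → (∀ i, 0 ≤ u i) →
      iIndepFun
        (fun i : Fin n => fun ω => X (u (i + 1)) ω - X (u i) ω) P)
    (Δ K : Set ℝ) (hΔK : Δ ⊆ K) (hKbdd : Bornology.IsBounded K)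
    (hK : (fun t : ℝ => (P {ω | X t ω ∈ K}).toReal) =O[atTop]
      fun t : ℝ => t ^ (-(1 : ℝ) / 2)) :
    ∀ n : ℕ, 0 < n →
      (fun t : ℝ => (P {ω | ∀ τ : ℝ, 0 ≤ τ → τ ≤ t → X τ ω ∈ Δ}).toReal) =O[atTop]
        fun t : ℝ => t ^ (-(n : ℝ) / 2) := by
  intro n _
  set B := Metric.closedBall (0 : ℝ) (Metric.diam Δ)
  by_cases hdeg : ∀ r, 0 < r → ∀ᵐ ω ∂P, X r ω ∈ B
  · have hK0 : Tendsto (fun t => (P {ω | X t ω ∈ K}).toReal) atTop (𝓝 0) :=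
      hK.trans_tendsto <| by
        simpa [neg_div] using tendsto_rpow_neg_atTop (by norm_num : (0 : ℝ) < 1 / 2)
    have h0K := zero_notMem_of_tendsto_measure_mem
      (fun t ht => ae_eq_zero_of_forall_ae_mem_closedBall hmeas hX0 hstat hindep hdeg ht) hK0
    refine (Asymptotics.isBigO_zero _ _).congr' ?_ EventuallyEq.rfl
    filter_upwards [eventually_ge_atTop 0] with t ht
    rw [measure_forall_mem_eq_zero_of_zero_notMem hX0 (fun h => h0K (hΔK h)) ht,
      ENNReal.toReal_zero]
  · simp only [not_forall] at hdeg
    obtain ⟨r, hr, hescape⟩ := hdeg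
    have hw : P (X r ⁻¹' B) < 1 := prob_le_one.lt_of_ne fun h => hescape <| ae_iff.2 <|
      (prob_compl_eq_zero_iff ((hmeas r) Metric.isClosed_closedBall.measurableSet)).2 h
    refine isBigO_rpow_of_le_pow_floor (w := (P (X r ⁻¹' B)).toReal) hr ENNReal.toReal_nonneg
      ?_ (Eventually.of_forall fun _ => ENNReal.toReal_nonneg) ?_ _
    · simpa using (ENNReal.toReal_lt_toReal (by finiteness) ENNReal.one_ne_top).2 hw
    · filter_upwards [eventually_ge_atTop 0] with t ht
      rw [← ENNReal.toReal_pow]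
      exact ENNReal.toReal_mono (by finiteness) (measure_forall_mem_le_pow hmeas hstat hindep
        (hKbdd.subset hΔK) hr.le ((le_div_iff₀ hr).1 (Nat.floor_le (by positivity))))

/-- Theorem 3.7: let X_t be a Lévy process (X_0 = 0 a.s., stationary independent increments,
a.s. right-continuous paths), let Δ be contained in a finite interval K and suppose
P(X_t ∈ K) = O(t^{-1/2}) as t → ∞. Then for every positive integer n the survival
probability p(t,Δ) = P(X_τ ∈ Δ for all 0 ≤ τ ≤ t) satisfies p(t,Δ) = O(t^{-n/2}). -/
theorem stmt7 {Ω : Type*} [MeasurableSpace Ω] (P : Measure Ω) [IsProbabilityMeasure P]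
    (X : ℝ → Ω → ℝ) (hmeas : ∀ t : ℝ, Measurable (X t))
    (hX0 : ∀ᵐ ω ∂P, X 0 ω = 0)
    (hstat : ∀ s t : ℝ, 0 ≤ s → s ≤ t →
      Measure.map (fun ω => X t ω - X s ω) P = Measure.map (X (t - s)) P)
    (hindep : ∀ (n : ℕ) (u : ℕ → ℝ), Monotone u → (∀ i, 0 ≤ u i) →
      iIndepFun
        (fun i : Fin n => fun ω => X (u (i + 1)) ω - X (u i) ω) P)
    (hrc : ∀ᵐ ω ∂P, ∀ t : ℝ, 0 ≤ t → ContinuousWithinAt (fun s => X s ω) (Ici t) t)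
    (Δ K : Set ℝ) (hΔK : Δ ⊆ K) (hKbdd : Bornology.IsBounded K)
    (hK : (fun t : ℝ => (P {ω | X t ω ∈ K}).toReal) =O[atTop]
      fun t : ℝ => t ^ (-(1 : ℝ) / 2)) :
    ∀ n : ℕ, 0 < n →
      (fun t : ℝ => (P {ω | ∀ τ : ℝ, 0 ≤ τ → τ ≤ t → X τ ω ∈ Δ}).toReal) =O[atTop]
        fun t : ℝ => t ^ (-(n : ℝ) / 2) :=
  stmt7_general P X hmeas hX0 hstat hindep Δ K hΔK hKbdd hK
end
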